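/- Let P1, P2, P3 be paths on the triangular grid, each with exactly one bend, that pairwise share at least one grid edge. Suppose that E(P1) ∩ E(P2) and E(P1) ∩ E(P3) are both contained in the edge set of one and the same segment of P1, and that (E(P1) ∩ E(P2)) ∩ (E(P1) ∩ E(P3)) = ∅. Then P2 and P3 have the same bend point, and there is a grid point common to P1, P2 and P3 (so the three paths form a claw-clique). -/

import Mathlib

/-- The triangular grid: the simple graph on `ℤ × ℤ` where two points are adjacent
iff their difference is `±(1,0)`, `±(0,1)` or `±(1,1)`. -/
def TGrid : SimpleGraph (ℤ × ℤ) where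
  Adj u v :=
    (v.1 - u.1 = 1 ∧ v.2 - u.2 = 0) ∨ (v.1 - u.1 = -1 ∧ v.2 - u.2 = 0) ∨
    (v.1 - u.1 = 0 ∧ v.2 - u.2 = 1) ∨ (v.1 - u.1 = 0 ∧ v.2 - u.2 = -1) ∨
    (v.1 - u.1 = 1 ∧ v.2 - u.2 = 1) ∨ (v.1 - u.1 = -1 ∧ v.2 - u.2 = -1)
  symm := ⟨by intro u v h; omega⟩
  loopless := ⟨by intro u h; omega⟩

/-- The (symmetric) direction datum of a grid edge: the pair of absolute coordinate
differences.  For grid edges this is `(1,0)` (horizontal), `(0,1)` (vertical) or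
`(1,1)` (diagonal). -/
def edir (e : Sym2 (ℤ × ℤ)) : ℤ × ℤ :=
  Sym2.lift ⟨fun u v => (|u.1 - v.1|, |u.2 - v.2|), by
    intro u v; simp [abs_sub_comm]⟩ e

/-- The `t`-th edge of a walk. -/
def wEdge {u v : ℤ × ℤ} (p : TGrid.Walk u v) (t : ℕ) : Sym2 (ℤ × ℤ) :=
  s(p.getVert t, p.getVert (t + 1))

/-- The number of bends of a walk: the number of consecutive pairs of edges with
different directions. -/
def bendCount {u v : ℤ × ℤ} (p : TGrid.Walk u v) : ℕ :=
  (List.range (p.length - 1)).countP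
    (fun i => decide (edir (wEdge p i) ≠ edir (wEdge p (i + 1))))

/-- `b` is a bend point of the walk `p`. -/
def IsBendAt {u v : ℤ × ℤ} (p : TGrid.Walk u v) (b : ℤ × ℤ) : Prop :=
  ∃ i : ℕ, i + 2 ≤ p.length ∧ p.getVert (i + 1) = b ∧
    edir (wEdge p i) ≠ edir (wEdge p (i + 1))

/-- A (nontrivial simple) path on the triangular grid. -/
structure TPath where
  src : ℤ × ℤ
  dst : ℤ × ℤ
  walk : TGrid.Walk src dst
  isPath : walk.IsPath
  nontriv : 0 < walk.length

/-- The set of grid edges of a path. -/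
def pEdges (P : TPath) : Set (Sym2 (ℤ × ℤ)) := {e | e ∈ P.walk.edges}

/-- The set of grid points of a path. -/
def pPts (P : TPath) : Set (ℤ × ℤ) := {q | q ∈ P.walk.support}

/-- A segment of a path: a maximal straight (bend-free) subpath, recorded by the
interval of edge indices `[i, j)` it occupies. -/
structure Segment (P : TPath) where
  i : ℕ
  j : ℕ
  lt : i < j
  le : j ≤ P.walk.length
  straight : ∀ t, i ≤ t → t < j → edir (wEdge P.walk t) = edir (wEdge P.walk i)
  maxLeft : i = 0 ∨ edir (wEdge P.walk (i - 1)) ≠ edir (wEdge P.walk i)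
  maxRight : j = P.walk.length ∨ edir (wEdge P.walk (j - 1)) ≠ edir (wEdge P.walk j)

/-- The set of grid edges of a segment. -/
def Segment.edges {P : TPath} (s : Segment P) : Set (Sym2 (ℤ × ℤ)) :=
  {e | ∃ t, s.i ≤ t ∧ t < s.j ∧ e = wEdge P.walk t}

/-- The set of grid points of a segment. -/
def Segment.pts {P : TPath} (s : Segment P) : Set (ℤ × ℤ) :=
  {q | ∃ t, s.i ≤ t ∧ t ≤ s.j ∧ q = P.walk.getVert t}

/-- The direction of a segment. -/
def Segment.dir {P : TPath} (s : Segment P) : ℤ × ℤ := edir (wEdge P.walk s.i)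

/-- The three directions of the triangular grid. -/
inductive Dir | H | V | D
deriving DecidableEq

/-- The direction of the (straight) line from `a` to `b`. -/
def dirOf (a b : ℤ × ℤ) : Dir :=
  if a.2 = b.2 then .H else if a.1 = b.1 then .V else .D

/-- A grid line of the triangular grid: a full horizontal, vertical or diagonal line. -/
structure GridLine where
  dir : Dir
  c : ℤ

/-- The parametrization of the points of a grid line. -/
def GridLine.pt (l : GridLine) (t : ℤ) : ℤ × ℤ :=
  match l.dir with
  | .H => (t, l.c)
  | .V => (l.c, t)
  | .D => (l.c + t, t)

/-- The `t`-th edge of a grid line. -/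
def GridLine.edge (l : GridLine) (t : ℤ) : Sym2 (ℤ × ℤ) := s(l.pt t, l.pt (t + 1))

/-- The set of grid points of a grid line. -/
def GridLine.pts (l : GridLine) : Set (ℤ × ℤ) := Set.range l.pt

/-- The set of grid edges of a grid line. -/
def GridLine.edges (l : GridLine) : Set (Sym2 (ℤ × ℤ)) := Set.range l.edge

/-- A right triangle of the triangular grid, given by a base corner `p`, a leg
length `k ≥ 1`, and one of the two possible orientations. -/
structure RightTri where
  p : ℤ × ℤ
  k : ℤ
  hk : 1 ≤ k
  orientA : Bool

/-- The set of grid edges of a right triangle. -/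
def RightTri.edges (T : RightTri) : Set (Sym2 (ℤ × ℤ)) :=
  if T.orientA then
    {e | ∃ t : ℤ, 0 ≤ t ∧ t < T.k ∧
      (e = s((T.p.1 + t, T.p.2), (T.p.1 + t + 1, T.p.2)) ∨
       e = s((T.p.1 + T.k, T.p.2 + t), (T.p.1 + T.k, T.p.2 + t + 1)) ∨
       e = s((T.p.1 + t, T.p.2 + t), (T.p.1 + t + 1, T.p.2 + t + 1)))}
  else
    {e | ∃ t : ℤ, 0 ≤ t ∧ t < T.k ∧
      (e = s((T.p.1, T.p.2 + t), (T.p.1, T.p.2 + t + 1)) ∨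
       e = s((T.p.1 + t, T.p.2 + T.k), (T.p.1 + t + 1, T.p.2 + T.k)) ∨
       e = s((T.p.1 + t, T.p.2 + t), (T.p.1 + t + 1, T.p.2 + t + 1)))}

/-- The three corners of a right triangle. -/
def RightTri.corners (T : RightTri) : Set (ℤ × ℤ) :=
  if T.orientA then {T.p, (T.p.1 + T.k, T.p.2), (T.p.1 + T.k, T.p.2 + T.k)}
  else {T.p, (T.p.1, T.p.2 + T.k), (T.p.1 + T.k, T.p.2 + T.k)}

/-- `U(𝒫)`: the subgraph of the grid formed by all segments of members of the family
that share at least one grid edge with another member, given by its set of edges. -/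
def UEdges {ι : Type} (P : ι → TPath) : Set (Sym2 (ℤ × ℤ)) :=
  {e | ∃ i : ι, ∃ s : Segment (P i), e ∈ s.edges ∧
        ∃ j : ι, j ≠ i ∧ (s.edges ∩ pEdges (P j)).Nonempty}

/-- A B₁-EPGₜ representation of a simple graph `G`: a family of at most-one-bend
paths on the triangular grid whose edge-intersection graph is `G`. -/
def IsB1EPGtRep {V : Type} (G : SimpleGraph V) (Rep : V → TPath) : Prop :=
  (∀ v, bendCount (Rep v).walk ≤ 1) ∧
  ∀ u v : V, u ≠ v → (G.Adj u v ↔ (pEdges (Rep u) ∩ pEdges (Rep v)).Nonempty)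

/-! Let `L` be the grid line carrying the segment `s` of `P1`. A one-bend path is the union of
two non-parallel rays from its bend point. Since `P2` shares an edge with `s`, one of its rays
runs along `L` and its edges on `L` form an interval of `L` ending at the bend point `B₂`, while
the other ray only crosses `L` at `B₂`; likewise for `P3`. The two intervals meet `s` and are
disjoint there, hence (one-dimensional Helly) disjoint altogether. So a common edge of `P2` and
`P3` lies on both crossing rays, which forces `B₂ = B₃`. This common endpoint of two disjoint
intervals that both meet `s` lies on `s`, hence on `P1`. -/

open Set

def gridSteps : Set (ℤ × ℤ) := {(1, 0), (-1, 0), (0, 1), (0, -1), (1, 1), (-1, -1)}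

def Parallel (u w : ℤ × ℤ) : Prop := w = u ∨ w = -u

def lineEdge (c d : ℤ × ℤ) (m : ℤ) : Sym2 (ℤ × ℤ) := s(c + m • d, c + (m + 1) • d)

section GridSteps

variable {u v w : ℤ × ℤ}

lemma tGrid_adj_iff : TGrid.Adj u v ↔ v - u ∈ gridSteps := by
  obtain ⟨u1, u2⟩ := u
  obtain ⟨v1, v2⟩ := v
  simp only [TGrid, gridSteps, mem_insert_iff, mem_singleton_iff, Prod.mk_sub_mk, Prod.mk.injEq]

lemma ne_zero_of_mem_gridSteps (hu : u ∈ gridSteps) : u ≠ 0 := by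
  simp only [gridSteps, mem_insert_iff, mem_singleton_iff] at hu
  rcases hu with rfl | rfl | rfl | rfl | rfl | rfl <;> decide

lemma neg_mem_gridSteps (hu : u ∈ gridSteps) : -u ∈ gridSteps := by
  simp only [gridSteps, mem_insert_iff, mem_singleton_iff] at hu ⊢
  rcases hu with rfl | rfl | rfl | rfl | rfl | rfl <;> decide

lemma Parallel.symm (h : Parallel u v) : Parallel v u := by
  rcases h with rfl | rfl
  exacts [Or.inl rfl, Or.inr (neg_neg u).symm]

lemma Parallel.trans (huv : Parallel u v) (hvw : Parallel v w) : Parallel u w := by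
  rcases huv with rfl | rfl <;> rcases hvw with rfl | rfl <;> simp [Parallel]

lemma parallel_iff_abs_eq (hu : u ∈ gridSteps) (hv : v ∈ gridSteps) :
    Parallel u v ↔ (|u.1|, |u.2|) = (|v.1|, |v.2|) := by
  simp only [gridSteps, mem_insert_iff, mem_singleton_iff] at hu hv
  rcases hu with rfl | rfl | rfl | rfl | rfl | rfl <;>
  rcases hv with rfl | rfl | rfl | rfl | rfl | rfl <;> norm_num [Parallel]

lemma eq_zero_of_smul_eq_smul (hu : u ∈ gridSteps) (hv : v ∈ gridSteps) (huv : ¬Parallel u v)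
    {μ l : ℤ} (h : μ • u = l • v) : μ = 0 ∧ l = 0 := by
  simp only [gridSteps, mem_insert_iff, mem_singleton_iff] at hu hv
  rcases hu with rfl | rfl | rfl | rfl | rfl | rfl <;>
  rcases hv with rfl | rfl | rfl | rfl | rfl | rfl <;>
  simp [Parallel, Prod.ext_iff] at huv h <;> omega

end GridSteps

/-- One-dimensional Helly: three pairwise meeting intervals have a common point. -/
lemma le_or_le_of_Ico_inter_Ico {β a b a' b' j j' : ℤ} (hj : j ∈ Ico 0 β ∩ Ico a b)
    (hj' : j' ∈ Ico 0 β ∩ Ico a' b') (hsep : Ico 0 β ∩ Ico a b ∩ Ico a' b' = ∅) :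
    b ≤ a' ∨ b' ≤ a := by
  simp only [mem_inter_iff, mem_Ico] at hj hj'
  by_contra! h
  exact eq_empty_iff_forall_notMem.mp hsep (max (max 0 a) a')
    (by simp only [mem_inter_iff, mem_Ico]; omega)

section Lines

variable {c d c' d' : ℤ × ℤ}

lemma edir_mk_add (a x : ℤ × ℤ) : edir s(a, a + x) = (|x.1|, |x.2|) := by
  simp [edir]

lemma edir_lineEdge (c d : ℤ × ℤ) (m : ℤ) : edir (lineEdge c d m) = (|d.1|, |d.2|) := by
  rw [lineEdge, show c + (m + 1) • d = c + m • d + d by module, edir_mk_add]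

lemma lineEdge_add_smul (c d : ℤ × ℤ) (k t : ℤ) :
    lineEdge (c + k • d) d t = lineEdge c d (k + t) := by
  simp only [lineEdge]
  congr 1 <;> module

lemma lineEdge_neg (c d : ℤ × ℤ) (t : ℤ) : lineEdge c (-d) t = lineEdge c d (-t - 1) := by
  rw [lineEdge, lineEdge, Sym2.eq_swap]
  congr 1 <;> module

lemma lineEdge_injective (hd : d ≠ 0) : Function.Injective (lineEdge c d) := by
  intro j j' h
  have hinj := smul_left_injective ℤ hd
  rcases Sym2.eq_iff.mp h with ⟨h1, -⟩ | ⟨h1, h2⟩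
  · exact hinj (add_left_cancel h1)
  · have := hinj (add_left_cancel h1)
    have := hinj (add_left_cancel h2)
    omega

lemma exists_eq_add_smul_of_lineEdge_eq {j j' : ℤ} (h : lineEdge c d j = lineEdge c' d' j') :
    ∃ k : ℤ, c' = c + k • d ∧ Parallel d d' := by
  rcases Sym2.eq_iff.mp h with ⟨h1, h2⟩ | ⟨h1, h2⟩
  · obtain rfl : d' = d := by linear_combination (norm := module) h1 - h2
    exact ⟨j - j', by linear_combination (norm := module) -h1, Or.inl rfl⟩
  · obtain rfl : d' = -d := by linear_combination (norm := module) h2 - h1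
    exact ⟨j + j' + 1, by linear_combination (norm := module) -h1, Or.inr rfl⟩

end Lines

section Rays

variable {c d B u w : ℤ × ℤ}

lemma eq_of_lineEdge_eq {w' : ℤ × ℤ} {k k' t t' : ℤ} (hd : d ∈ gridSteps) (hw : w ∈ gridSteps)
    (hdw : ¬Parallel d w) (h : lineEdge (c + k • d) w t = lineEdge (c + k' • d) w' t') :
    k = k' := by
  obtain ⟨μ, hμ, -⟩ := exists_eq_add_smul_of_lineEdge_eq h
  have hμd : μ • w = (k' - k) • d := by linear_combination (norm := module) -hμ
  have := (eq_zero_of_smul_eq_smul hw hd (fun h ↦ hdw h.symm) hμd).2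
  omega

lemma lineEdge_mem_range_of_parallel (hdu : Parallel d u) (k t : ℤ) :
    lineEdge (c + k • d) u t ∈ range (lineEdge c d) := by
  rcases hdu with rfl | rfl
  exacts [⟨_, (lineEdge_add_smul c u k t).symm⟩, ⟨_, by rw [lineEdge_neg, lineEdge_add_smul]⟩]

lemma exists_Ico_lineEdge_mem_image_iff (hd : d ≠ 0) (hdu : Parallel d u) (k m : ℤ) :
    ∃ a b : ℤ, (k = a ∨ k = b) ∧
      ∀ j, lineEdge c d j ∈ lineEdge (c + k • d) u '' Ico 0 m ↔ j ∈ Ico a b := by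
  simp only [mem_image, mem_Ico]
  rcases hdu with rfl | rfl
  · refine ⟨k, k + m, Or.inl rfl, fun j ↦ ?_⟩
    simp only [lineEdge_add_smul, (lineEdge_injective hd).eq_iff]
    exact ⟨fun ⟨t, ht, htj⟩ ↦ by omega, fun hj ↦ ⟨j - k, by omega, by omega⟩⟩
  · refine ⟨k - m, k, Or.inr rfl, fun j ↦ ?_⟩
    simp only [lineEdge_neg, lineEdge_add_smul, (lineEdge_injective hd).eq_iff]
    exact ⟨fun ⟨t, ht, htj⟩ ↦ by omega, fun hj ↦ ⟨k - 1 - j, by omega, by omega⟩⟩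

lemma exists_Ico_of_lineEdge_mem_ray {m n j₀ : ℤ} (hd : d ∈ gridSteps)
    (huw : ¬Parallel u w) (hj₀ : lineEdge c d j₀ ∈ lineEdge B u '' Ico 0 m) :
    ∃ a b k : ℤ, B = c + k • d ∧ (k = a ∨ k = b) ∧ ¬Parallel d w ∧
      (∀ j, lineEdge c d j ∈ lineEdge B u '' Ico 0 m ∪ lineEdge B w '' Ico 0 n ↔ j ∈ Ico a b) ∧
      ∀ e ∈ lineEdge B u '' Ico 0 m ∪ lineEdge B w '' Ico 0 n,
        e ∉ range (lineEdge c d) → e ∈ range (lineEdge B w) := by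
  obtain ⟨t₀, -, ht₀⟩ := hj₀
  obtain ⟨k, rfl, hdu⟩ := exists_eq_add_smul_of_lineEdge_eq ht₀.symm
  have hdw : ¬Parallel d w := fun hdw ↦ huw (hdu.symm.trans hdw)
  have hoff : ∀ j t, lineEdge c d j ≠ lineEdge (c + k • d) w t := fun j t h ↦ by
    obtain ⟨-, -, hdw'⟩ := exists_eq_add_smul_of_lineEdge_eq h
    exact hdw hdw'
  obtain ⟨a, b, hk, hab⟩ := exists_Ico_lineEdge_mem_image_iff (ne_zero_of_mem_gridSteps hd) hdu k m
  refine ⟨a, b, k, rfl, hk, hdw, fun j ↦ ?_, ?_⟩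
  · rw [mem_union, ← hab]
    exact or_iff_left fun ⟨t, _, ht⟩ ↦ hoff j t ht.symm
  · rintro e (⟨t, -, rfl⟩ | ⟨t, -, rfl⟩) he
    · exact absurd (lineEdge_mem_range_of_parallel hdu k t) he
    · exact mem_range_self t

end Rays

def IsStraight {a b : ℤ × ℤ} (p : TGrid.Walk a b) (i n : ℕ) : Prop :=
  ∀ t, i ≤ t → t + 2 ≤ i + n → edir (wEdge p t) = edir (wEdge p (t + 1))

section Walks

variable {a b : ℤ × ℤ} {p : TGrid.Walk a b}

lemma mem_edges_iff_exists_wEdge {e : Sym2 (ℤ × ℤ)} :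
    e ∈ p.edges ↔ ∃ t < p.length, wEdge p t = e := by
  induction e using Sym2.ind with
  | _ x y => exact p.mk_mem_edges_iff_exists

lemma getVert_succ_sub_mem_gridSteps {t : ℕ} (ht : t < p.length) :
    p.getVert (t + 1) - p.getVert t ∈ gridSteps :=
  tGrid_adj_iff.mp (p.adj_getVert_succ ht)

/-- The opposite step would return to the vertex just left. -/
lemma getVert_sub_eq_of_edir_eq (hp : p.IsPath) {t : ℕ} (ht : t + 2 ≤ p.length)
    (h : edir (wEdge p t) = edir (wEdge p (t + 1))) :
    p.getVert (t + 2) - p.getVert (t + 1) = p.getVert (t + 1) - p.getVert t := by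
  have hx := getVert_succ_sub_mem_gridSteps (p := p) (t := t) (by omega)
  have hy := getVert_succ_sub_mem_gridSteps (p := p) (t := t + 1) (by omega)
  have hxy := (parallel_iff_abs_eq hx hy).mpr (by
    rwa [← edir_mk_add (p.getVert t), ← edir_mk_add (p.getVert (t + 1)), add_sub_cancel,
      add_sub_cancel])
  rcases hxy with hxy | hxy
  · exact hxy
  · have hret : p.getVert (t + 2) = p.getVert t := by
      linear_combination (norm := module) hxy
    have := hp.getVert_injOn ht (show t ≤ p.length by omega) hret
    omega

lemma IsStraight.getVert_sub_eq (hp : p.IsPath) {i n : ℕ} (h : IsStraight p i n)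
    (hn : i + n ≤ p.length) {t : ℕ} (ht : t < n) :
    p.getVert (i + t + 1) - p.getVert (i + t) = p.getVert (i + 1) - p.getVert i := by
  induction t with
  | zero => rfl
  | succ t ih =>
    rw [← ih (by omega), show i + (t + 1) + 1 = i + t + 2 by omega,
      show i + (t + 1) = i + t + 1 by omega]
    exact getVert_sub_eq_of_edir_eq hp (by omega) (h _ (by omega) (by omega))

lemma IsStraight.getVert_add_eq (hp : p.IsPath) {i n : ℕ} (h : IsStraight p i n)
    (hn : i + n ≤ p.length) {t : ℕ} (ht : t ≤ n) :
    p.getVert (i + t) = p.getVert i + (t : ℤ) • (p.getVert (i + 1) - p.getVert i) := by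
  induction t with
  | zero => simp
  | succ t ih =>
    have hstep := h.getVert_sub_eq hp hn (t := t) (by omega)
    rw [← add_assoc]
    push_cast
    linear_combination (norm := module) ih (by omega) + hstep

lemma IsStraight.wEdge_add_eq (hp : p.IsPath) {i n : ℕ} (h : IsStraight p i n)
    (hn : i + n ≤ p.length) {t : ℕ} (ht : t < n) :
    wEdge p (i + t) = lineEdge (p.getVert i) (p.getVert (i + 1) - p.getVert i) t := by
  rw [wEdge, lineEdge, h.getVert_add_eq hp hn ht.le, Nat.add_assoc, h.getVert_add_eq hp hn ht]
  push_cast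
  rfl

lemma exists_bend_of_bendCount_eq_one (h : bendCount p = 1) :
    ∃ k, k + 2 ≤ p.length ∧ edir (wEdge p k) ≠ edir (wEdge p (k + 1)) ∧
      ∀ t, t + 2 ≤ p.length → t ≠ k → edir (wEdge p t) = edir (wEdge p (t + 1)) := by
  rw [bendCount, List.countP_eq_length_filter, List.length_eq_one_iff] at h
  obtain ⟨k, hk⟩ := h
  have hmem : ∀ t, t ∈ (List.range (p.length - 1)).filter
      (fun i => decide (edir (wEdge p i) ≠ edir (wEdge p (i + 1)))) ↔ t = k := fun t ↦ by
    rw [hk, List.mem_singleton]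
  simp only [List.mem_filter, List.mem_range, decide_eq_true_eq] at hmem
  have hk := (hmem k).mpr rfl
  refine ⟨k, by omega, hk.2, fun t ht htk ↦ ?_⟩
  by_contra hne
  exact htk ((hmem t).mp ⟨by omega, hne⟩)

lemma edges_eq_image_union_image {f g : ℤ → Sym2 (ℤ × ℤ)} {k : ℕ} (hk : k ≤ p.length)
    (hf : ∀ t < k, wEdge p t = f (k - 1 - t)) (hg : ∀ t < p.length - k, wEdge p (k + t) = g t) :
    {e | e ∈ p.edges} = f '' Ico 0 k ∪ g '' Ico 0 (p.length - k : ℕ) := by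
  ext e
  simp only [mem_ofPred_eq, mem_edges_iff_exists_wEdge, mem_union, mem_image, mem_Ico]
  constructor
  · rintro ⟨t, ht, rfl⟩
    by_cases htk : t < k
    · exact Or.inl ⟨k - 1 - t, ⟨by omega, by omega⟩, (hf t htk).symm⟩
    · obtain ⟨r, rfl⟩ : ∃ r, t = k + r := ⟨t - k, by omega⟩
      exact Or.inr ⟨r, ⟨by omega, by omega⟩, (hg r (by omega)).symm⟩
  · rintro (⟨j, ⟨hj₀, hj⟩, rfl⟩ | ⟨j, ⟨hj₀, hj⟩, rfl⟩)
    · refine ⟨k - 1 - j.toNat, by omega, ?_⟩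
      rw [hf _ (by omega)]
      congr 1
      omega
    · refine ⟨k + j.toNat, by omega, ?_⟩
      rw [hg _ (by omega)]
      congr 1
      omega

end Walks

theorem TPath.exists_rays_of_bendCount_eq_one (P : TPath) (h : bendCount P.walk = 1) :
    ∃ B u w : ℤ × ℤ, ∃ m n : ℤ, IsBendAt P.walk B ∧ u ∈ gridSteps ∧ w ∈ gridSteps ∧
      ¬Parallel u w ∧ pEdges P = lineEdge B u '' Ico 0 m ∪ lineEdge B w '' Ico 0 n := by
  obtain ⟨k, hk, hbend, hstraight⟩ := exists_bend_of_bendCount_eq_one h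
  have h₁ : IsStraight P.walk 0 (k + 1) := fun t _ ht ↦ hstraight t (by omega) (by omega)
  have h₂ : IsStraight P.walk (k + 1) (P.walk.length - (k + 1)) := fun t ht _ ↦
    hstraight t (by omega) (by omega)
  have hv := getVert_succ_sub_mem_gridSteps (p := P.walk) (t := 0) (by omega)
  have hw := getVert_succ_sub_mem_gridSteps (p := P.walk) (t := k + 1) (by omega)
  have hB := h₁.getVert_add_eq P.isPath (t := k + 1) (by omega) le_rfl
  rw [zero_add] at hB
  set B := P.walk.getVert (k + 1)
  set v := P.walk.getVert (0 + 1) - P.walk.getVert 0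
  set w := P.walk.getVert (k + 1 + 1) - B
  have e₁ : ∀ t < k + 1, wEdge P.walk t = lineEdge B (-v) (k - t) := fun t ht ↦ by
    rw [hB, lineEdge_neg, lineEdge_add_smul, ← zero_add t, h₁.wEdge_add_eq P.isPath (by omega) ht]
    congr 1
    push_cast
    ring
  have e₂ : ∀ t < P.walk.length - (k + 1), wEdge P.walk (k + 1 + t) = lineEdge B w t :=
    fun t ht ↦ h₂.wEdge_add_eq P.isPath (by omega) ht
  refine ⟨B, -v, w, k + 1, (P.walk.length - (k + 1) : ℕ), ⟨k, hk, rfl, hbend⟩,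
    neg_mem_gridSteps hv, hw, fun hvw ↦ hbend ?_,
    edges_eq_image_union_image (k := k + 1) (by omega) ?_ e₂⟩
  · rw [e₁ k (by omega), ← add_zero (k + 1), e₂ 0 (by omega), edir_lineEdge, edir_lineEdge]
    exact (parallel_iff_abs_eq (neg_mem_gridSteps hv) hw).mp hvw
  · intro t ht
    rw [e₁ t ht]
    congr 1
    push_cast
    ring

theorem TPath.exists_Ico_of_lineEdge_mem {c d : ℤ × ℤ} (hd : d ∈ gridSteps) (P : TPath)
    (h : bendCount P.walk = 1) {j₀ : ℤ} (hj₀ : lineEdge c d j₀ ∈ pEdges P) :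
    ∃ (B w : ℤ × ℤ) (a b k : ℤ), IsBendAt P.walk B ∧ B = c + k • d ∧ (k = a ∨ k = b) ∧
      w ∈ gridSteps ∧ ¬Parallel d w ∧ (∀ j, lineEdge c d j ∈ pEdges P ↔ j ∈ Ico a b) ∧
      ∀ e ∈ pEdges P, e ∉ range (lineEdge c d) → e ∈ range (lineEdge B w) := by
  obtain ⟨B, u, w, m, n, hB, hu, hw, huw, hP⟩ := P.exists_rays_of_bendCount_eq_one h
  rw [hP] at hj₀ ⊢
  rcases hj₀ with hj₀ | hj₀
  · obtain ⟨a, b, k, hBk, hk, hdw, hab, hoff⟩ := exists_Ico_of_lineEdge_mem_ray (n := n) hd huw hj₀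
    exact ⟨B, w, a, b, k, hB, hBk, hk, hw, hdw, hab, hoff⟩
  · rw [union_comm]
    obtain ⟨a, b, k, hBk, hk, hdu, hab, hoff⟩ :=
      exists_Ico_of_lineEdge_mem_ray (n := m) hd (fun h ↦ huw h.symm) hj₀
    exact ⟨B, u, a, b, k, hB, hBk, hk, hu, hdu, hab, hoff⟩

lemma Segment.edges_subset {P : TPath} (s : Segment P) : s.edges ⊆ pEdges P := by
  rintro e ⟨t, -, ht, rfl⟩
  exact mem_edges_iff_exists_wEdge.mpr ⟨t, by have := s.le; omega, rfl⟩

lemma Segment.exists_line {P : TPath} (s : Segment P) :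
    ∃ (c d : ℤ × ℤ) (β : ℤ), d ∈ gridSteps ∧ s.edges = lineEdge c d '' Ico 0 β ∧
      ∀ k ∈ Icc 0 β, c + k • d ∈ pPts P := by
  have hlen : s.i + (s.j - s.i) ≤ P.walk.length := by have := s.lt; have := s.le; omega
  have hs : IsStraight P.walk s.i (s.j - s.i) := fun t ht ht' ↦
    (s.straight t ht (by omega)).trans (s.straight (t + 1) (by omega) (by omega)).symm
  refine ⟨P.walk.getVert s.i, _, (s.j - s.i : ℕ),
    getVert_succ_sub_mem_gridSteps (p := P.walk) (t := s.i) (by have := s.lt; omega), ?_, ?_⟩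
  · ext e
    simp only [Segment.edges, mem_ofPred_eq, mem_image, mem_Ico]
    constructor
    · rintro ⟨t, ht, ht', rfl⟩
      obtain ⟨r, rfl⟩ : ∃ r, t = s.i + r := ⟨t - s.i, by omega⟩
      exact ⟨r, ⟨by omega, by omega⟩, (hs.wEdge_add_eq P.isPath hlen (by omega)).symm⟩
    · rintro ⟨j, ⟨hj₀, hj⟩, rfl⟩
      refine ⟨s.i + j.toNat, by omega, by omega, ?_⟩
      rw [hs.wEdge_add_eq P.isPath hlen (by omega)]
      congr 1
      omega
  · rintro k ⟨hk₀, hk⟩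
    have hv := hs.getVert_add_eq P.isPath hlen (t := k.toNat) (by omega)
    rw [Int.toNat_of_nonneg hk₀] at hv
    rw [← hv]
    exact P.walk.getVert_mem_support _

lemma IsBendAt.mem_pPts {P : TPath} {B : ℤ × ℤ} (h : IsBendAt P.walk B) : B ∈ pPts P := by
  obtain ⟨i, -, rfl, -⟩ := h
  exact P.walk.getVert_mem_support _

theorem stmt11_general (P1 P2 P3 : TPath)
    (h2 : bendCount P2.walk = 1) (h3 : bendCount P3.walk = 1)
    (h12 : (pEdges P1 ∩ pEdges P2).Nonempty)
    (h13 : (pEdges P1 ∩ pEdges P3).Nonempty)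
    (h23 : (pEdges P2 ∩ pEdges P3).Nonempty)
    (s : Segment P1)
    (hs2 : pEdges P1 ∩ pEdges P2 ⊆ s.edges)
    (hs3 : pEdges P1 ∩ pEdges P3 ⊆ s.edges)
    (hdisj : (pEdges P1 ∩ pEdges P2) ∩ (pEdges P1 ∩ pEdges P3) = ∅) :
    (∃ b : ℤ × ℤ, IsBendAt P2.walk b ∧ IsBendAt P3.walk b) ∧
    (∃ q : ℤ × ℤ, q ∈ pPts P1 ∧ q ∈ pPts P2 ∧ q ∈ pPts P3) := by
  obtain ⟨c, d, β, hd, hs, hpts⟩ := s.exists_line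
  have hL : ∀ j ∈ Ico 0 β, lineEdge c d j ∈ pEdges P1 := fun j hj ↦
    s.edges_subset (hs ▸ mem_image_of_mem _ hj)
  obtain ⟨_, he₁, he₂⟩ := h12
  obtain ⟨j₂, hj₂, rfl⟩ := hs ▸ hs2 ⟨he₁, he₂⟩
  obtain ⟨_, he₁, he₃⟩ := h13
  obtain ⟨j₃, hj₃, rfl⟩ := hs ▸ hs3 ⟨he₁, he₃⟩
  obtain ⟨B₂, w₂, a₂, b₂, k₂, hbend₂, rfl, hk₂, hw₂, hdw₂, hI₂, hoff₂⟩ :=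
    P2.exists_Ico_of_lineEdge_mem hd h2 he₂
  obtain ⟨B₃, w₃, a₃, b₃, k₃, hbend₃, rfl, hk₃, -, -, hI₃, hoff₃⟩ :=
    P3.exists_Ico_of_lineEdge_mem hd h3 he₃
  have horder : b₂ ≤ a₃ ∨ b₃ ≤ a₂ :=
    le_or_le_of_Ico_inter_Ico ⟨hj₂, (hI₂ _).mp he₂⟩ ⟨hj₃, (hI₃ _).mp he₃⟩ <|
      eq_empty_iff_forall_notMem.mpr fun j ⟨⟨hj, h₂⟩, h₃⟩ ↦ eq_empty_iff_forall_notMem.mp hdisj _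
        ⟨⟨hL j hj, (hI₂ j).mpr h₂⟩, hL j hj, (hI₃ j).mpr h₃⟩
  simp only [mem_Ico] at hj₂ hj₃ hI₂ hI₃
  have hk : k₂ = k₃ := by
    obtain ⟨e, he₂, he₃⟩ := h23
    by_cases he : e ∈ range (lineEdge c d)
    · obtain ⟨j, rfl⟩ := he
      have := (hI₂ j).mp he₂
      have := (hI₃ j).mp he₃
      omega
    · obtain ⟨t, rfl⟩ := hoff₂ e he₂ he
      obtain ⟨t', ht'⟩ := hoff₃ _ he₃ he
      exact eq_of_lineEdge_eq hd hw₂ hdw₂ ht'.symm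
  subst hk
  have := (hI₂ _).mp he₂
  have := (hI₃ _).mp he₃
  exact ⟨⟨_, hbend₂, hbend₃⟩, _, hpts k₂ ⟨by omega, by omega⟩, hbend₂.mem_pPts, hbend₃.mem_pPts⟩

/-- If three pairwise edge-intersecting exactly-one-bend paths are
such that both edge intersections with `P1` lie in one and the same segment of `P1`
and are disjoint, then `P2` and `P3` bend at the same point and the three paths have
a common grid point (they form a claw-clique). -/
theorem stmt11 (P1 P2 P3 : TPath)
    (h1 : bendCount P1.walk = 1) (h2 : bendCount P2.walk = 1) (h3 : bendCount P3.walk = 1)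
    (h12 : (pEdges P1 ∩ pEdges P2).Nonempty)
    (h13 : (pEdges P1 ∩ pEdges P3).Nonempty)
    (h23 : (pEdges P2 ∩ pEdges P3).Nonempty)
    (s : Segment P1)
    (hs2 : pEdges P1 ∩ pEdges P2 ⊆ s.edges)
    (hs3 : pEdges P1 ∩ pEdges P3 ⊆ s.edges)
    (hdisj : (pEdges P1 ∩ pEdges P2) ∩ (pEdges P1 ∩ pEdges P3) = ∅) :
    (∃ b : ℤ × ℤ, IsBendAt P2.walk b ∧ IsBendAt P3.walk b) ∧
    (∃ q : ℤ × ℤ, q ∈ pPts P1 ∧ q ∈ pPts P2 ∧ q ∈ pPts P3) :=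
  stmt11_general P1 P2 P3 h2 h3 h12 h13 h23 s hs2 hs3 hdisj
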